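/- Let Ω ⊂ ℝ² be the open triangle with vertices A(−2, 1/3), B(0, 1/3), C(0, 1). Define α(x,y) = ((x y² + y − 1/9)/3)^{1/3} + 1/3 (real cube root) and z(x,y) = 1 − e^{1/α(x,y) − 1/y}. Then: (i) α(x,y) > 0 for every (x,y) ∈ Ω; (ii) for every (x,y) ∈ Ω, z(x,y) + (2xy+1)·∂z/∂x(x,y) − y²·∂z/∂y(x,y) = 1; (iii) z(x, x/3 + 1) = 0 for every x ∈ (−2, 0). -/

import Mathlib

/-!
The quantity ψ(x,y) = (x y² + y − 1/9)/3 is a stream function of the velocity: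
u = 3 (∂ψ/∂y, −∂ψ/∂x), so u·∇ψ = 0 and every function of ψ, in particular 1/α, is constant along
the characteristics, while u·∇(−1/y) = −1. Hence g = 1/α − 1/y satisfies u·∇g = −1 and
z = 1 − e^g satisfies z + u·∇z = 1 − e^g + e^g = 1.
Since ψ(x,y) − (y − 1/3)³ = y²(x − 3(y − 1))/3, ψ is positive on Ω and equals (y − 1/3)³ on the
side y = x/3 + 1, where therefore α = y and z = 1 − e⁰ = 0.
-/

open MeasureTheory Set Real

/-- The real (odd) cube root. -/
noncomputable def cbrt (t : ℝ) : ℝ :=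
  if 0 ≤ t then t ^ ((1:ℝ)/3) else -((-t) ^ ((1:ℝ)/3))

/-- The open triangle with vertices A(−2,1/3), B(0,1/3), C(0,1):
its sides lie on the lines y = 1/3, x = 0 and y = x/3 + 1. -/
def TriangleEx4 : Set (ℝ × ℝ) :=
  {p : ℝ × ℝ | 1/3 < p.2 ∧ p.1 < 0 ∧ p.2 < p.1 / 3 + 1}

/-- α(x,y) = ((x y² + y − 1/9)/3)^{1/3} + 1/3. -/
noncomputable def alphaEx4 : ℝ × ℝ → ℝ := fun p =>
  cbrt ((p.1 * p.2 ^ 2 + p.2 - 1/9) / 3) + 1/3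

/-- The explicit solution z(x,y) = 1 − e^{1/α(x,y) − 1/y} of Example 4. -/
noncomputable def zEx4 : ℝ × ℝ → ℝ := fun p =>
  1 - Real.exp (1 / alphaEx4 p - 1 / p.2)

/-- Partial derivative ∂z/∂x. -/
noncomputable def zEx4x (p : ℝ × ℝ) : ℝ := deriv (fun t => zEx4 (t, p.2)) p.1

/-- Partial derivative ∂z/∂y. -/
noncomputable def zEx4y (p : ℝ × ℝ) : ℝ := deriv (fun t => zEx4 (p.1, t)) p.2

open Filter Topology

lemma cbrt_pos {t : ℝ} (ht : 0 < t) : 0 < cbrt t := by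
  rw [cbrt, if_pos ht.le]
  positivity

lemma cbrt_pow_three (s : ℝ) : cbrt (s ^ 3) = s := by
  rcases le_or_gt 0 s with hs | hs
  · rw [cbrt, if_pos (by positivity), ← rpow_natCast, ← rpow_mul hs]
    norm_num
  · have hcube : s ^ 3 < 0 := Odd.pow_neg (by decide) hs
    rw [cbrt, if_neg hcube.not_ge, show -s ^ 3 = (-s) ^ 3 by ring, ← rpow_natCast,
      ← rpow_mul (by linarith)]
    norm_num

lemma differentiableAt_cbrt {t : ℝ} (ht : t ≠ 0) : DifferentiableAt ℝ cbrt t := by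
  rcases ht.lt_or_gt with ht | ht
  · have hloc : (fun s => -((-s) ^ ((1:ℝ)/3))) =ᶠ[𝓝 t] cbrt := by
      filter_upwards [Iio_mem_nhds ht] with s hs
      exact (if_neg (not_le.2 hs)).symm
    exact (differentiableAt_id.neg.rpow_const (Or.inl (by simp; linarith))).neg
      |>.congr_of_eventuallyEq hloc.symm
  · have hloc : (fun s => s ^ ((1:ℝ)/3)) =ᶠ[𝓝 t] cbrt := by
      filter_upwards [Ioi_mem_nhds ht] with s hs
      exact (if_pos hs.le).symm
    exact (differentiableAt_id.rpow_const (Or.inl ht.ne')).congr_of_eventuallyEq hloc.symm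

noncomputable def streamEx4 (p : ℝ × ℝ) : ℝ := (p.1 * p.2 ^ 2 + p.2 - 1/9) / 3

lemma alphaEx4_eq (p : ℝ × ℝ) : alphaEx4 p = cbrt (streamEx4 p) + 1/3 := rfl

lemma streamEx4_sub_cube (p : ℝ × ℝ) :
    streamEx4 p - (p.2 - 1/3) ^ 3 = p.2 ^ 2 * (p.1 - 3 * (p.2 - 1)) / 3 := by
  unfold streamEx4
  ring

lemma streamEx4_pos {p : ℝ × ℝ} (hp : p ∈ TriangleEx4) : 0 < streamEx4 p := by
  obtain ⟨hy, -, hxy⟩ := hp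
  have hcube : 0 < (p.2 - 1/3) ^ 3 := pow_pos (by linarith) 3
  have hdiff : 0 < p.2 ^ 2 * (p.1 - 3 * (p.2 - 1)) / 3 := by
    have : 0 < p.2 ^ 2 := by positivity
    have : 0 < p.1 - 3 * (p.2 - 1) := by linarith
    positivity
  linarith [streamEx4_sub_cube p]

lemma alphaEx4_pos {p : ℝ × ℝ} (hp : p ∈ TriangleEx4) : 0 < alphaEx4 p := by
  have := cbrt_pos (streamEx4_pos hp)
  rw [alphaEx4_eq]
  positivity

lemma hasDerivAt_streamEx4_fst (p : ℝ × ℝ) :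
    HasDerivAt (fun t => streamEx4 (t, p.2)) (p.2 ^ 2 / 3) p.1 := by
  have h := ((((hasDerivAt_id p.1).mul_const (p.2 ^ 2)).add_const p.2).sub_const
    ((1:ℝ)/9)).div_const 3
  exact h.congr_deriv (by ring)

lemma hasDerivAt_streamEx4_snd (p : ℝ × ℝ) :
    HasDerivAt (fun s => streamEx4 (p.1, s)) ((2 * p.1 * p.2 + 1) / 3) p.2 := by
  have h := ((((hasDerivAt_pow 2 p.2).const_mul p.1).add (hasDerivAt_id p.2)).sub_const
    ((1:ℝ)/9)).div_const 3
  exact h.congr_deriv (by norm_num; ring)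

lemma one_sub_exp_transport {G : ℝ × ℝ → ℝ} {p : ℝ × ℝ} {a c gx gy : ℝ}
    (hx : HasDerivAt (fun t => G (t, p.2)) gx p.1)
    (hy : HasDerivAt (fun s => G (p.1, s)) gy p.2) (hG : a * gx - c * gy = -1) :
    1 - exp (G p) + a * deriv (fun t => 1 - exp (G (t, p.2))) p.1
      - c * deriv (fun s => 1 - exp (G (p.1, s))) p.2 = 1 := by
  rw [(hx.exp.const_sub 1).deriv, (hy.exp.const_sub 1).deriv]
  linear_combination (-exp (G p)) * hG

lemma zEx4_transport {p : ℝ × ℝ} (hp : p ∈ TriangleEx4) :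
    zEx4 p + (2 * p.1 * p.2 + 1) * zEx4x p - p.2 ^ 2 * zEx4y p = 1 := by
  have hy0 : p.2 ≠ 0 := by linarith [hp.1]
  set φ : ℝ → ℝ := fun w => 1 / (cbrt w + 1/3)
  have hφ : DifferentiableAt ℝ φ (streamEx4 p) := by
    have hψ := streamEx4_pos hp
    have := cbrt_pos hψ
    exact (differentiableAt_const 1).div ((differentiableAt_cbrt hψ.ne').add_const _)
      (by positivity)
  have hG_fst : HasDerivAt (fun t => φ (streamEx4 (t, p.2)) - 1 / p.2)
      (deriv φ (streamEx4 p) * (p.2 ^ 2 / 3)) p.1 :=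
    (hφ.hasDerivAt.comp p.1 (hasDerivAt_streamEx4_fst p)).sub_const _
  have hG_snd : HasDerivAt (fun s => φ (streamEx4 (p.1, s)) - 1 / s)
      (deriv φ (streamEx4 p) * ((2 * p.1 * p.2 + 1) / 3) + 1 / p.2 ^ 2) p.2 := by
    have h := (hφ.hasDerivAt.comp p.2 (hasDerivAt_streamEx4_snd p)).sub
      ((hasDerivAt_const p.2 (1:ℝ)).div (hasDerivAt_id p.2) hy0)
    exact h.congr_deriv (by simp only [id]; ring)
  exact one_sub_exp_transport (G := fun q => φ (streamEx4 q) - 1 / q.2) hG_fst hG_snd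
    (by field_simp; ring)

lemma alphaEx4_hypotenuse (x : ℝ) : alphaEx4 (x, x / 3 + 1) = x / 3 + 1 := by
  have hψ : streamEx4 (x, x / 3 + 1) = (x / 3 + 2/3) ^ 3 := by
    linear_combination streamEx4_sub_cube (x, x / 3 + 1)
  rw [alphaEx4_eq, hψ, cbrt_pow_three]
  ring

theorem stmt_4 :
    (∀ p ∈ TriangleEx4, 0 < alphaEx4 p) ∧
    (∀ p ∈ TriangleEx4,
      zEx4 p + (2 * p.1 * p.2 + 1) * zEx4x p - p.2 ^ 2 * zEx4y p = 1) ∧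
    (∀ x ∈ Ioo (-2:ℝ) 0, zEx4 (x, x / 3 + 1) = 0) := by
  refine ⟨fun _ hp => alphaEx4_pos hp, fun _ hp => zEx4_transport hp, fun x _ => ?_⟩
  simp [zEx4, alphaEx4_hypotenuse]
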